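/- For every TeamLTL(⩔,∼⊥)-formula φ there exists a TeamLTL-formula φ* of size linear in the size of φ such that A¹φ ≡ A¹φ*, i.e., for every team (T,i): ({t},i) ⊨ φ for all t∈T if and only if ({t},i) ⊨ φ* for all t∈T. In particular, the given bottom-up rewriting (e.g., (∼⊥∧ψ)∨(∼⊥∧θ) ↦ ∼⊥∧(ψ∧θ), (∼⊥∧ψ)⩔(∼⊥∧θ) ↦ ∼⊥∧(ψ∨θ), (∼⊥∧ψ)⩔θ ↦ ψ∨θ, X(∼⊥∧ψ) ↦ ∼⊥∧Xψ, ψU(∼⊥∧θ) ↦ ∼⊥∧(ψUθ), (∼⊥∧ψ)Wθ ↦ ψWθ, etc., and replacing remaining ⩔ by ∨) preserves the truth value of formulae over all teams of cardinality at most 1. -/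
import Mathlib


set_option maxHeartbeats 1000000

universe u

/-- A trace over the set `α` of atomic propositions: an infinite sequence of
sets of propositions. -/
abbrev Trace (α : Type u) := ℕ → Set α

/-- LTL formulae in negation normal form. -/
inductive LTLForm (α : Type u) : Type u where
  | pos : α → LTLForm α
  | neg : α → LTLForm α
  | lor : LTLForm α → LTLForm α → LTLForm α
  | land : LTLForm α → LTLForm α → LTLForm α
  | next : LTLForm α → LTLForm α
  | luntil : LTLForm α → LTLForm α → LTLForm α
  | wuntil : LTLForm α → LTLForm α → LTLForm α

namespace LTLForm
variable {α : Type u}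

/-- Standard single-trace LTL semantics. -/
def sat (t : Trace α) : ℕ → LTLForm α → Prop
  | i, pos p => p ∈ t i
  | i, neg p => p ∉ t i
  | i, lor φ ψ => sat t i φ ∨ sat t i ψ
  | i, land φ ψ => sat t i φ ∧ sat t i ψ
  | i, next φ => sat t (i+1) φ
  | i, luntil φ ψ => ∃ k, i ≤ k ∧ sat t k ψ ∧ ∀ m, i ≤ m → m < k → sat t m φ
  | i, wuntil φ ψ => ∀ k, i ≤ k → sat t k φ ∨ ∃ m, i ≤ m ∧ m ≤ k ∧ sat t m ψ

/-- Size of an LTL formula. -/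
def size : LTLForm α → ℕ
  | pos _ => 1
  | neg _ => 1
  | lor φ ψ => φ.size + ψ.size + 1
  | land φ ψ => φ.size + ψ.size + 1
  | next φ => φ.size + 1
  | luntil φ ψ => φ.size + ψ.size + 1
  | wuntil φ ψ => φ.size + ψ.size + 1

end LTLForm

/-- Extensions of `TeamLTL` by atoms and connectives:
Boolean disjunction `⩔`, Boolean negation `∼`, inclusion atoms `⊆`,
the universal subteam quantifier `A`, the singleton subteam quantifier `A¹`
and the non-emptiness atom `∼⊥`. -/
inductive TExt : Type where
  | bdis | bneg | incl | asub | asub1 | nebot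
deriving DecidableEq

/-- Formulae of TeamLTL together with all the extensions considered in the paper
(fragments are carved out via `TeamForm.exts`). -/
inductive TeamForm (α : Type u) : Type u where
  | pos : α → TeamForm α
  | neg : α → TeamForm α
  | lor : TeamForm α → TeamForm α → TeamForm α
  | land : TeamForm α → TeamForm α → TeamForm α
  | next : TeamForm α → TeamForm α
  | luntil : TeamForm α → TeamForm α → TeamForm α
  | wuntil : TeamForm α → TeamForm α → TeamForm α
  | bdis : TeamForm α → TeamForm α → TeamForm α
  | bneg : TeamForm α → TeamForm α
  | incl : List (LTLForm α × LTLForm α) → TeamForm α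
  | asub : TeamForm α → TeamForm α
  | asub1 : TeamForm α → TeamForm α
  | nebot : TeamForm α

namespace TeamForm
variable {α : Type u}

/-- Synchronous team semantics for (extended) TeamLTL. -/
def sat : Set (Trace α) → ℕ → TeamForm α → Prop
  | T, i, pos p => ∀ t ∈ T, p ∈ t i
  | T, i, neg p => ∀ t ∈ T, p ∉ t i
  | T, i, lor φ ψ => ∃ T₁ T₂, T₁ ∪ T₂ = T ∧ sat T₁ i φ ∧ sat T₂ i ψ
  | T, i, land φ ψ => sat T i φ ∧ sat T i ψ
  | T, i, next φ => sat T (i+1) φ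
  | T, i, luntil φ ψ => ∃ k, i ≤ k ∧ sat T k ψ ∧ ∀ m, i ≤ m → m < k → sat T m φ
  | T, i, wuntil φ ψ => ∀ k, i ≤ k → sat T k φ ∨ ∃ m, i ≤ m ∧ m ≤ k ∧ sat T m ψ
  | T, i, bdis φ ψ => sat T i φ ∨ sat T i ψ
  | T, i, bneg φ => ¬ sat T i φ
  | T, i, incl ps => ∀ t ∈ T, ∃ t' ∈ T, ∀ p ∈ ps, (LTLForm.sat t i p.1 ↔ LTLForm.sat t' i p.2)
  | T, i, asub φ => ∀ S, S ⊆ T → sat S i φ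
  | T, i, asub1 φ => ∀ t ∈ T, sat {t} i φ
  | T, _, nebot => T.Nonempty

/-- The collection of extensions (atoms/connectives beyond core TeamLTL)
occurring in a formula. -/
def exts : TeamForm α → Set TExt
  | pos _ => ∅
  | neg _ => ∅
  | lor φ ψ => exts φ ∪ exts ψ
  | land φ ψ => exts φ ∪ exts ψ
  | next φ => exts φ
  | luntil φ ψ => exts φ ∪ exts ψ
  | wuntil φ ψ => exts φ ∪ exts ψ
  | bdis φ ψ => insert TExt.bdis (exts φ ∪ exts ψ)
  | bneg φ => insert TExt.bneg (exts φ)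
  | incl _ => {TExt.incl}
  | asub φ => insert TExt.asub (exts φ)
  | asub1 φ => insert TExt.asub1 (exts φ)
  | nebot => {TExt.nebot}

/-- Size of an (extended) TeamLTL formula. -/
def size : TeamForm α → ℕ
  | pos _ => 1
  | neg _ => 1
  | lor φ ψ => φ.size + ψ.size + 1
  | land φ ψ => φ.size + ψ.size + 1
  | next φ => φ.size + 1
  | luntil φ ψ => φ.size + ψ.size + 1
  | wuntil φ ψ => φ.size + ψ.size + 1
  | bdis φ ψ => φ.size + ψ.size + 1
  | bneg φ => φ.size + 1
  | incl ps => (ps.map (fun p => p.1.size + p.2.size)).sum + 1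
  | asub φ => φ.size + 1
  | asub1 φ => φ.size + 1
  | nebot => 1

end TeamForm

namespace Stmt18
variable {α : Type u}

/-- Does the empty team satisfy the formula? (correct on the fragment). -/
def emp : TeamForm α → Bool
  | .pos _ => true
  | .neg _ => true
  | .lor φ ψ => emp φ && emp ψ
  | .land φ ψ => emp φ && emp ψ
  | .next φ => emp φ
  | .luntil _ ψ => emp ψ
  | .wuntil φ ψ => emp φ || emp ψ
  | .bdis φ ψ => emp φ || emp ψ
  | .bneg _ => false
  | .incl _ => false
  | .asub _ => false
  | .asub1 _ => false
  | .nebot => false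

/-- A pure TeamLTL tautology. -/
def tau [Inhabited α] : TeamForm α := .lor (.pos default) (.neg default)

/-- The translation. -/
def tr [Inhabited α] : TeamForm α → TeamForm α
  | .pos p => .pos p
  | .neg p => .neg p
  | .lor φ ψ =>
      match emp φ, emp ψ with
      | true, true => .lor (tr φ) (tr ψ)
      | true, false => tr ψ
      | false, true => tr φ
      | false, false => .land (tr φ) (tr ψ)
  | .land φ ψ => .land (tr φ) (tr ψ)
  | .next φ => .next (tr φ)
  | .luntil φ ψ => .luntil (tr φ) (tr ψ)
  | .wuntil φ ψ => .wuntil (tr φ) (tr ψ)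
  | .bdis φ ψ => .lor (tr φ) (tr ψ)
  | .bneg _ => tau
  | .incl _ => tau
  | .asub _ => tau
  | .asub1 _ => tau
  | .nebot => tau

lemma exts_tau [Inhabited α] : (tau : TeamForm α).exts = ∅ := by
  simp [tau, TeamForm.exts]

lemma exts_tr [Inhabited α] (φ : TeamForm α) : (tr φ).exts = ∅ := by
  induction φ with
  | lor φ ψ ihφ ihψ =>
    cases h1 : emp φ <;> cases h2 : emp ψ <;>
      simp [tr, h1, h2, TeamForm.exts, ihφ, ihψ]
  | _ => simp_all [tr, TeamForm.exts, exts_tau]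

lemma size_tr [Inhabited α] (φ : TeamForm α) : (tr φ).size ≤ 3 * φ.size := by
  induction φ with
  | lor φ ψ ihφ ihψ =>
    cases h1 : emp φ <;> cases h2 : emp ψ <;>
      simp only [tr, h1, h2, TeamForm.size] <;> omega
  | incl ps => simp [tr, tau, TeamForm.size]
  | _ => simp_all [tr, tau, TeamForm.size] <;> omega

lemma sat_empty_tau [Inhabited α] (i : ℕ) :
    TeamForm.sat (∅ : Set (Trace α)) i tau := by
  exact ⟨∅, ∅, by simp, by simp [TeamForm.sat], by simp [TeamForm.sat]⟩

lemma sat_singleton_tau [Inhabited α] (t : Trace α) (i : ℕ) :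
    TeamForm.sat {t} i tau := by
  by_cases h : (default : α) ∈ t i
  · exact ⟨{t}, ∅, by simp, by simpa [TeamForm.sat], by simp [TeamForm.sat]⟩
  · exact ⟨∅, {t}, by simp, by simp [TeamForm.sat], by simpa [TeamForm.sat]⟩

lemma sat_empty_tr [Inhabited α] (φ : TeamForm α) (i : ℕ) :
    TeamForm.sat (∅ : Set (Trace α)) i (tr φ) := by
  induction φ generalizing i with
  | pos p => simp [tr, TeamForm.sat]
  | neg p => simp [tr, TeamForm.sat]
  | lor φ ψ ihφ ihψ =>
    cases h1 : emp φ <;> cases h2 : emp ψ <;> simp only [tr, h1, h2]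
    · exact ⟨ihφ i, ihψ i⟩
    · exact ihφ i
    · exact ihψ i
    · exact ⟨∅, ∅, by simp, ihφ i, ihψ i⟩
  | land φ ψ ihφ ihψ => exact ⟨ihφ i, ihψ i⟩
  | next φ ihφ => exact ihφ (i + 1)
  | luntil φ ψ ihφ ihψ =>
    exact ⟨i, le_refl i, ihψ i, fun m _ _ => ihφ m⟩
  | wuntil φ ψ ihφ ihψ => exact fun k _ => Or.inl (ihφ k)
  | bdis φ ψ ihφ ihψ =>
    exact ⟨∅, ∅, by simp, ihφ i, ihψ i⟩
  | _ => exact sat_empty_tau i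

lemma emp_iff (φ : TeamForm α) (h : φ.exts ⊆ {TExt.bdis, TExt.nebot}) (i : ℕ) :
    TeamForm.sat (∅ : Set (Trace α)) i φ ↔ emp φ = true := by
  induction φ generalizing i with
  | pos p => simp [emp, TeamForm.sat]
  | neg p => simp [emp, TeamForm.sat]
  | lor φ ψ ihφ ihψ =>
    simp only [TeamForm.exts, Set.union_subset_iff] at h
    constructor
    · rintro ⟨T₁, T₂, hu, h1, h2⟩
      have e1 : T₁ = ∅ := by
        rw [← Set.subset_empty_iff]; rw [← hu]; exact Set.subset_union_left
      have e2 : T₂ = ∅ := by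
        rw [← Set.subset_empty_iff]; rw [← hu]; exact Set.subset_union_right
      subst e1; subst e2
      simp only [emp, Bool.and_eq_true]
      exact ⟨(ihφ h.1 i).mp h1, (ihψ h.2 i).mp h2⟩
    · intro he
      simp only [emp, Bool.and_eq_true] at he
      exact ⟨∅, ∅, by simp, (ihφ h.1 i).mpr he.1, (ihψ h.2 i).mpr he.2⟩
  | land φ ψ ihφ ihψ =>
    simp only [TeamForm.exts, Set.union_subset_iff] at h
    simp [TeamForm.sat, emp, ihφ h.1 i, ihψ h.2 i]
  | next φ ihφ =>
    simp only [TeamForm.exts] at h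
    simpa [TeamForm.sat, emp] using ihφ h (i + 1)
  | luntil φ ψ ihφ ihψ =>
    simp only [TeamForm.exts, Set.union_subset_iff] at h
    constructor
    · rintro ⟨k, _, hk, _⟩
      simpa [emp] using (ihψ h.2 k).mp hk
    · intro he
      simp only [emp] at he
      exact ⟨i, le_refl i, (ihψ h.2 i).mpr he, fun m _ hm => by omega⟩
  | wuntil φ ψ ihφ ihψ =>
    simp only [TeamForm.exts, Set.union_subset_iff] at h
    constructor
    · intro hs
      rcases hs i (le_refl i) with h1 | ⟨m, _, _, h2⟩
      · simp [emp, Bool.or_eq_true, (ihφ h.1 i).mp h1]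
      · simp [emp, Bool.or_eq_true, (ihψ h.2 m).mp h2]
    · intro he
      simp only [emp, Bool.or_eq_true] at he
      rcases he with he | he
      · exact fun k _ => Or.inl ((ihφ h.1 k).mpr he)
      · exact fun k hk => Or.inr ⟨k, hk, le_refl k, (ihψ h.2 k).mpr he⟩
  | bdis φ ψ ihφ ihψ =>
    simp only [TeamForm.exts, Set.insert_subset_iff, Set.union_subset_iff] at h
    simp [TeamForm.sat, emp, ihφ h.2.1 i, ihψ h.2.2 i]
  | bneg φ ihφ =>
    exfalso
    have := h (by simp [TeamForm.exts] : TExt.bneg ∈ (TeamForm.bneg φ).exts)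
    simp at this
  | incl ps =>
    exfalso
    have := h (by simp [TeamForm.exts] : TExt.incl ∈ (TeamForm.incl ps).exts)
    simp at this
  | asub φ ihφ =>
    exfalso
    have := h (by simp [TeamForm.exts] : TExt.asub ∈ (TeamForm.asub φ).exts)
    simp at this
  | asub1 φ ihφ =>
    exfalso
    have := h (by simp [TeamForm.exts] : TExt.asub1 ∈ (TeamForm.asub1 φ).exts)
    simp at this
  | nebot => simp [emp, TeamForm.sat, Set.Nonempty]

lemma sat_lor_singleton {t : Trace α} {i : ℕ} {A B : TeamForm α} :
    TeamForm.sat {t} i (.lor A B) ↔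
      (TeamForm.sat {t} i A ∧ TeamForm.sat (∅ : Set (Trace α)) i B) ∨
      (TeamForm.sat (∅ : Set (Trace α)) i A ∧ TeamForm.sat {t} i B) ∨
      (TeamForm.sat {t} i A ∧ TeamForm.sat {t} i B) := by
  constructor
  · rintro ⟨T₁, T₂, hu, h1, h2⟩
    have s1 : T₁ ⊆ {t} := hu ▸ Set.subset_union_left
    have s2 : T₂ ⊆ {t} := hu ▸ Set.subset_union_right
    rcases Set.subset_singleton_iff_eq.mp s1 with e1 | e1 <;>
      rcases Set.subset_singleton_iff_eq.mp s2 with e2 | e2 <;>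
        subst e1 <;> subst e2
    · rw [Set.union_self] at hu
      exact absurd hu.symm (Set.singleton_ne_empty t)
    · exact Or.inr (Or.inl ⟨h1, h2⟩)
    · exact Or.inl ⟨h1, h2⟩
    · exact Or.inr (Or.inr ⟨h1, h2⟩)
  · rintro (⟨h1, h2⟩ | ⟨h1, h2⟩ | ⟨h1, h2⟩)
    · exact ⟨{t}, ∅, by simp, h1, h2⟩
    · exact ⟨∅, {t}, by simp, h1, h2⟩
    · exact ⟨{t}, {t}, by simp, h1, h2⟩

lemma sat_tr [Inhabited α] (φ : TeamForm α)
    (h : φ.exts ⊆ {TExt.bdis, TExt.nebot}) (t : Trace α) (i : ℕ) :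
    TeamForm.sat {t} i φ ↔ TeamForm.sat {t} i (tr φ) := by
  induction φ generalizing i with
  | pos p => simp [tr]
  | neg p => simp [tr]
  | lor φ ψ ihφ ihψ =>
    simp only [TeamForm.exts, Set.union_subset_iff] at h
    have eφ := emp_iff φ h.1 i
    have eψ := emp_iff ψ h.2 i
    have iφ := ihφ h.1 i
    have iψ := ihψ h.2 i
    rw [sat_lor_singleton]
    cases h1 : emp φ <;> cases h2 : emp ψ <;> simp only [tr, h1, h2] <;>
      simp only [h1, h2] at eφ eψ
    -- emp φ = false, emp ψ = false : translation is `land`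
    · simp only [TeamForm.sat]
      constructor
      · rintro (⟨_, h2'⟩ | ⟨h1', _⟩ | ⟨ha, hb⟩)
        · exact absurd (eψ.mp h2') (by simp)
        · exact absurd (eφ.mp h1') (by simp)
        · exact ⟨iφ.mp ha, iψ.mp hb⟩
      · rintro ⟨ha, hb⟩
        exact Or.inr (Or.inr ⟨iφ.mpr ha, iψ.mpr hb⟩)
    -- emp φ = false, emp ψ = true : translation is `tr φ`
    · constructor
      · rintro (⟨ha, _⟩ | ⟨h1', _⟩ | ⟨ha, _⟩)
        · exact iφ.mp ha
        · exact absurd (eφ.mp h1') (by simp)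
        · exact iφ.mp ha
      · intro ha
        exact Or.inl ⟨iφ.mpr ha, eψ.mpr trivial⟩
    -- emp φ = true, emp ψ = false : translation is `tr ψ`
    · constructor
      · rintro (⟨_, h2'⟩ | ⟨_, hb⟩ | ⟨_, hb⟩)
        · exact absurd (eψ.mp h2') (by simp)
        · exact iψ.mp hb
        · exact iψ.mp hb
      · intro hb
        exact Or.inr (Or.inl ⟨eφ.mpr trivial, iψ.mpr hb⟩)
    -- emp φ = true, emp ψ = true : translation is `lor`
    · rw [sat_lor_singleton]
      constructor
      · rintro (⟨ha, hb⟩ | ⟨ha, hb⟩ | ⟨ha, hb⟩)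
        · exact Or.inl ⟨iφ.mp ha, sat_empty_tr ψ i⟩
        · exact Or.inr (Or.inl ⟨sat_empty_tr φ i, iψ.mp hb⟩)
        · exact Or.inr (Or.inr ⟨iφ.mp ha, iψ.mp hb⟩)
      · rintro (⟨ha, _⟩ | ⟨_, hb⟩ | ⟨ha, hb⟩)
        · exact Or.inl ⟨iφ.mpr ha, eψ.mpr trivial⟩
        · exact Or.inr (Or.inl ⟨eφ.mpr trivial, iψ.mpr hb⟩)
        · exact Or.inr (Or.inr ⟨iφ.mpr ha, iψ.mpr hb⟩)
  | land φ ψ ihφ ihψ =>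
    simp only [TeamForm.exts, Set.union_subset_iff] at h
    simp only [tr, TeamForm.sat]
    rw [ihφ h.1 i, ihψ h.2 i]
  | next φ ihφ =>
    simp only [TeamForm.exts] at h
    simp only [tr, TeamForm.sat]
    exact ihφ h (i + 1)
  | luntil φ ψ ihφ ihψ =>
    simp only [TeamForm.exts, Set.union_subset_iff] at h
    simp only [tr, TeamForm.sat]
    constructor
    · rintro ⟨k, hk, hs, hm⟩
      exact ⟨k, hk, (ihψ h.2 k).mp hs, fun m h1 h2 => (ihφ h.1 m).mp (hm m h1 h2)⟩
    · rintro ⟨k, hk, hs, hm⟩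
      exact ⟨k, hk, (ihψ h.2 k).mpr hs, fun m h1 h2 => (ihφ h.1 m).mpr (hm m h1 h2)⟩
  | wuntil φ ψ ihφ ihψ =>
    simp only [TeamForm.exts, Set.union_subset_iff] at h
    simp only [tr, TeamForm.sat]
    constructor <;> intro hs k hk <;> rcases hs k hk with h1 | ⟨m, h2, h3, h4⟩
    · exact Or.inl ((ihφ h.1 k).mp h1)
    · exact Or.inr ⟨m, h2, h3, (ihψ h.2 m).mp h4⟩
    · exact Or.inl ((ihφ h.1 k).mpr h1)
    · exact Or.inr ⟨m, h2, h3, (ihψ h.2 m).mpr h4⟩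
  | bdis φ ψ ihφ ihψ =>
    simp only [TeamForm.exts, Set.insert_subset_iff, Set.union_subset_iff] at h
    simp only [tr]
    rw [sat_lor_singleton]
    simp only [TeamForm.sat]
    constructor
    · rintro (ha | hb)
      · exact Or.inl ⟨(ihφ h.2.1 i).mp ha, sat_empty_tr ψ i⟩
      · exact Or.inr (Or.inl ⟨sat_empty_tr φ i, (ihψ h.2.2 i).mp hb⟩)
    · rintro (⟨ha, _⟩ | ⟨_, hb⟩ | ⟨ha, _⟩)
      · exact Or.inl ((ihφ h.2.1 i).mpr ha)
      · exact Or.inr ((ihψ h.2.2 i).mpr hb)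
      · exact Or.inl ((ihφ h.2.1 i).mpr ha)
  | bneg φ ihφ =>
    exfalso
    have := h (by simp [TeamForm.exts] : TExt.bneg ∈ (TeamForm.bneg φ).exts)
    simp at this
  | incl ps =>
    exfalso
    have := h (by simp [TeamForm.exts] : TExt.incl ∈ (TeamForm.incl ps).exts)
    simp at this
  | asub φ ihφ =>
    exfalso
    have := h (by simp [TeamForm.exts] : TExt.asub ∈ (TeamForm.asub φ).exts)
    simp at this
  | asub1 φ ihφ =>
    exfalso
    have := h (by simp [TeamForm.exts] : TExt.asub1 ∈ (TeamForm.asub1 φ).exts)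
    simp at this
  | nebot =>
    simp only [tr]
    constructor
    · intro _; exact sat_singleton_tau t i
    · intro _; exact ⟨t, rfl⟩

/-- For every `TeamLTL(⩔,∼⊥)`-formula `φ` there exists a pure
`TeamLTL`-formula `φ*` of size linear in the size of `φ` such that
`A¹φ ≡ A¹φ*`; in particular the rewriting preserves the truth value of
formulae over all singleton teams, so that for every team `(T,i)`:
`({t},i) ⊨ φ` for all `t ∈ T` iff `({t},i) ⊨ φ*` for all `t ∈ T`. -/
theorem stmt_18 [Inhabited α] :
    ∃ c : ℕ, ∀ φ : TeamForm α, φ.exts ⊆ {TExt.bdis, TExt.nebot} →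
      ∃ φs : TeamForm α,
        -- `φ*` is a pure TeamLTL formula
        φs.exts = ∅ ∧
        -- of size linear in the size of `φ`
        φs.size ≤ c * φ.size ∧
        -- the rewriting preserves truth values over singleton teams
        (∀ (t : Trace α) (i : ℕ),
          TeamForm.sat {t} i φ ↔ TeamForm.sat {t} i φs) ∧
        -- hence `A¹φ ≡ A¹φ*`
        (∀ (T : Set (Trace α)) (i : ℕ),
          TeamForm.sat T i (TeamForm.asub1 φ) ↔ TeamForm.sat T i (TeamForm.asub1 φs)) := by
  refine ⟨3, fun φ h => ⟨tr φ, exts_tr φ, size_tr φ, fun t i => sat_tr φ h t i, ?_⟩⟩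
  intro T i
  simp only [TeamForm.sat]
  exact forall₂_congr fun t _ => sat_tr φ h t i

end Stmt18
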